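/- With K the tridiagonal period matrix defined by K_{ii} = p_{i-1} + p_i + 2(λ_i - λ_{i-1}) (p_0 = L), K_{i,i+1} = K_{i+1,i} = -p_i, K_{ij} = 0 otherwise, and the vector g⃗ = (g, g-1, ..., 1), the identity g⃗ K = (g+1)L e_1 holds, where e_1 = (1,0,...,0). -/

import Mathlib

/-!
Since `λ` is increasing, `min(λ_{i+1} - λ_0, λ_j - λ_0) - min(λ_i - λ_0, λ_j - λ_0)` is
`λ_{i+1} - λ_i` for the `g - i` indices `j > i` and `0` otherwise, so with `p_0 = L` we get
`p_{i+1} - p_i = -2 (g - i)(λ_{i+1} - λ_i)` for `0 ≤ i < g`. Column `b` of `g⃗ K` is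
`w_b (p_b + p_{b+1} + 2(λ_{b+1} - λ_b)) - (w_b + 1) p_b - (w_b - 1) p_{b+1}` with `w_b = g - b`
(the middle term absent for `b = 0`, the last one vanishing for `b = g - 1`), which the step
formula turns into `0` for `b > 0` and into `(g + 1) L` for `b = 0`.
-/

open Finset

/-- The tridiagonal period matrix of the tropical spectral curve, in 0-based
indexing: row `a` corresponds to the 1-based index `a+1`. -/
noncomputable def periodK (g : ℕ) (lam p : ℕ → ℝ) : Matrix (Fin g) (Fin g) ℝ :=
  fun a b =>
    if a = b then p a.val + p (a.val + 1) + 2 * (lam (a.val + 1) - lam a.val)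
    else if a.val + 1 = b.val then -p (a.val + 1)
    else if b.val + 1 = a.val then -p (b.val + 1)
    else 0

lemma min_add_one_sub_min {f : ℕ → ℝ} {g : ℕ} (hf : MonotoneOn f (Set.Iic g)) {i j : ℕ}
    (hi : i < g) (hj : j ≤ g) :
    min (f (i + 1)) (f j) - min (f i) (f j) = if i < j then f (i + 1) - f i else 0 := by
  have hmono : ∀ {m n}, m ≤ n → n ≤ g → f m ≤ f n := fun hmn hn =>
    hf (Set.mem_Iic.2 (hmn.trans hn)) (Set.mem_Iic.2 hn) hmn
  split_ifs with hij
  · rw [min_eq_left (hmono hij hj), min_eq_left (hmono hij.le hj)]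
  · rw [min_eq_right (hmono (by omega) (by omega)), min_eq_right (hmono (not_lt.1 hij) hi.le),
      sub_self]

lemma sum_min_add_one_sub_sum_min {f : ℕ → ℝ} {g : ℕ} (hf : MonotoneOn f (Set.Iic g)) {i : ℕ}
    (hi : i < g) :
    ∑ j ∈ Icc 1 g, min (f (i + 1)) (f j) - ∑ j ∈ Icc 1 g, min (f i) (f j) =
      (g - i) * (f (i + 1) - f i) := by
  have hfilter : {j ∈ Icc 1 g | i < j} = Ioc i g := by
    ext j
    simp only [mem_filter, mem_Icc, mem_Ioc]
    omega
  rw [← sum_sub_distrib, sum_congr rfl fun j hj => min_add_one_sub_min hf hi (mem_Icc.1 hj).2,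
    sum_ite, sum_const_zero, add_zero, sum_const, hfilter, Nat.card_Ioc, nsmul_eq_mul,
    Nat.cast_sub hi.le]

/- `p 0 = L` is the defining formula of the `p i` at `i = 0`, where every `min` vanishes, so the
step formula holds from `i = 0` on. -/
lemma p_add_one_sub_p {g : ℕ} {L : ℝ} {lam p : ℕ → ℝ}
    (hlam : ∀ i, i < g → lam i < lam (i + 1)) (hp0 : p 0 = L)
    (hp : ∀ i, 1 ≤ i → i ≤ g →
      p i = L - 2 * ∑ j ∈ Icc 1 g, min (lam i - lam 0) (lam j - lam 0))
    {i : ℕ} (hi : i < g) :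
    p (i + 1) - p i = -2 * (g - i) * (lam (i + 1) - lam i) := by
  have hmono : MonotoneOn (fun j => lam j - lam 0) (Set.Iic g) :=
    monotoneOn_of_le_add_one Set.ordConnected_Iic fun a _ _ ha =>
      sub_le_sub_right (hlam a (by simp only [Set.mem_Iic] at ha; omega)).le _
  have hp' : ∀ i ≤ g, p i = L - 2 * ∑ j ∈ Icc 1 g, min (lam i - lam 0) (lam j - lam 0) := by
    rintro (_ | i) hi
    · have hzero : ∀ j ∈ Icc 1 g, min (lam 0 - lam 0) (lam j - lam 0) = 0 := fun j hj => by
        have h0j : lam 0 - lam 0 ≤ lam j - lam 0 :=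
          hmono (by simp) (by simpa using (mem_Icc.1 hj).2) (Nat.zero_le j)
        rw [min_eq_left h0j, sub_self]
      rw [sum_eq_zero hzero, hp0, mul_zero, sub_zero]
    · exact hp _ (by omega) hi
  rw [hp' (i + 1) hi, hp' i hi.le]
  linear_combination (-2) * sum_min_add_one_sub_sum_min hmono hi

lemma periodK_apply {g : ℕ} (lam p : ℕ → ℝ) (a b : Fin g) :
    periodK g lam p a b =
      (if a.val = b.val then p b + p (b + 1) + 2 * (lam (b + 1) - lam b) else 0) +
      (if a.val + 1 = b.val then -p b else 0) + (if b.val + 1 = a.val then -p (b + 1) else 0) := by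
  simp only [periodK, Fin.ext_iff]
  split_ifs <;> first | omega | simp [*]

-- `w g = 0` lets the last column be treated like the others, as if it had an entry in row `g`.
lemma sum_mul_periodK {g : ℕ} (lam p w : ℕ → ℝ) (hw : w g = 0) (b : Fin g) :
    ∑ a : Fin g, w a * periodK g lam p a b =
      w b * (p b + p (b + 1) + 2 * (lam (b + 1) - lam b)) - w (b + 1) * p (b + 1) -
        if b.val = 0 then 0 else w (b - 1) * p b := by
  obtain ⟨b, hb⟩ := b
  simp only [periodK_apply]
  rw [Fin.sum_univ_eq_sum_range (fun a => w a *
    ((if a = b then p b + p (b + 1) + 2 * (lam (b + 1) - lam b) else 0) +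
      (if a + 1 = b then -p b else 0) + (if b + 1 = a then -p (b + 1) else 0)))]
  simp only [mul_add, sum_add_distrib, mul_ite, mul_zero, sum_ite_eq', mem_range, if_pos hb]
  have hprev : ∑ a ∈ range g, (if a + 1 = b then w a * -p b else 0) =
      -if b = 0 then 0 else w (b - 1) * p b := by
    cases b with
    | zero => simp
    | succ c => simp [show c < g by omega]
  have hnext : ∑ a ∈ range g, (if b + 1 = a then w a * -p (b + 1) else 0) =
      -(w (b + 1) * p (b + 1)) := by
    rw [sum_ite_eq]
    split_ifs with h
    · ring
    · rw [show b + 1 = g by simp only [mem_range] at h; omega, hw]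
      ring
  rw [hprev, hnext]
  ring

theorem gvec_mul_K_general (g : ℕ) (L : ℝ) (lam p : ℕ → ℝ)
    (hlam : ∀ i, i < g → lam i < lam (i + 1))
    (hp0 : p 0 = L)
    (hp : ∀ i, 1 ≤ i → i ≤ g →
      p i = L - 2 * ∑ j ∈ Finset.Icc 1 g, min (lam i - lam 0) (lam j - lam 0)) :
    ∀ b : Fin g, (∑ a : Fin g, ((g : ℝ) - a.val) * periodK g lam p a b) =
      if b.val = 0 then (g + 1) * L else 0 := by
  intro b
  have hstep := p_add_one_sub_p hlam hp0 hp b.isLt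
  rw [sum_mul_periodK lam p (fun a => (g : ℝ) - a) (sub_self _) b]
  obtain ⟨_ | c, _⟩ := b
  · simp only [Nat.cast_zero, Nat.cast_one, if_true, zero_add, sub_zero] at hstep ⊢
    linear_combination hstep + (g + 1 : ℝ) * hp0
  · simp only [Nat.add_eq_zero_iff, one_ne_zero, and_false, if_false, Nat.add_sub_cancel]
    push_cast at hstep ⊢
    linear_combination hstep

theorem gvec_mul_K (g : ℕ) (hg : 0 < g) (L : ℝ) (lam p : ℕ → ℝ)
    (hlam : ∀ i, i < g → lam i < lam (i + 1))
    (hL : 2 * ∑ i ∈ Finset.Icc 1 g, (lam i - lam 0) < L)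
    (hp0 : p 0 = L)
    (hp : ∀ i, 1 ≤ i → i ≤ g →
      p i = L - 2 * ∑ j ∈ Finset.Icc 1 g, min (lam i - lam 0) (lam j - lam 0)) :
    ∀ b : Fin g, (∑ a : Fin g, ((g : ℝ) - a.val) * periodK g lam p a b) =
      if b.val = 0 then (g + 1) * L else 0 :=
  gvec_mul_K_general g L lam p hlam hp0 hp
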